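/- arXiv:2011.07339 — 6 statements merged into one kernel-verified Lean document; each statement's English description precedes it below -/
import Mathlib

section
/- For all i, j ∈ ℕ, all a, b ∈ P, all λ, μ ∈ k and every w ∈ M = P[X], one has ρ_λ(i,a)(ρ_μ(j,b)(w)) − ρ_μ(j,b)(ρ_λ(i,a)(w)) = (−λ)^i·(−μ)^j·ρ_{λ+μ}(0,{a,b})(w). (This is the conformal-module Jacobi identity (x ⊗_λ (y ⊗_μ w)) − (y ⊗_μ (x ⊗_λ w)) = ([x ⊗_λ y] ⊗_{λ+μ} w) for x = ∂^i a and y = ∂^j b in the current Lie conformal algebra Cur L, acting on H ⊗ P; it shows that H ⊗ P is a conformal module over Cur L.) -/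
/-- The λ-action `ρ_λ(i,a)` of the element `∂^i a` of `H ⊗ P` on `H ⊗ P`, realized on the
polynomial ring `M = P[X]` (with `∂` acting as multiplication by `X`): on a monomial `u·X^m`
it is `ρ_λ(i,a)(u·X^m) = (−λ)^i·(X+λ)^m·({a,u} + λ·(a·u))`, extended `k`-linearly. -/
noncomputable def rhoConf {k P : Type*} [Field k] [CommRing P] [Algebra k P]
    (br : P →ₗ[k] P →ₗ[k] P) (i : ℕ) (a : P) (lam : k) (p : Polynomial P) : Polynomial P :=
  (-lam) ^ i • p.sum fun m u =>
    Polynomial.C (br a u + lam • (a * u)) *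
      (Polynomial.X + Polynomial.C (algebraMap k P lam)) ^ m

section Aux

variable {k P : Type*} [Field k] [CommRing P] [Algebra k P]

lemma rho_add (br : P →ₗ[k] P →ₗ[k] P) (i : ℕ) (a : P) (lam : k) (p q : Polynomial P) :
    rhoConf br i a lam (p + q) = rhoConf br i a lam p + rhoConf br i a lam q := by
  unfold rhoConf
  rw [Polynomial.sum_add_index, smul_add]
  · intro n; simp
  · intro n x y
    rw [show br a (x + y) + lam • (a * (x + y)) =
      (br a x + lam • (a * x)) + (br a y + lam • (a * y)) by
        rw [map_add, mul_add, smul_add]; ring, map_add, add_mul]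

lemma rho_monomial (br : P →ₗ[k] P →ₗ[k] P) (i : ℕ) (a : P) (lam : k) (m : ℕ) (u : P) :
    rhoConf br i a lam (Polynomial.monomial m u) =
      (-lam) ^ i • (Polynomial.C (br a u + lam • (a * u)) *
        (Polynomial.X + Polynomial.C (algebraMap k P lam)) ^ m) := by
  unfold rhoConf
  rw [Polynomial.sum_monomial_index]
  simp

lemma rho_smul (br : P →ₗ[k] P →ₗ[k] P) (i : ℕ) (a : P) (lam : k) (c : k) (p : Polynomial P) :
    rhoConf br i a lam (c • p) = c • rhoConf br i a lam p := by
  induction p using Polynomial.induction_on' with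
  | add p q hp hq => rw [smul_add, rho_add, rho_add, hp, hq, smul_add]
  | monomial m u =>
      have h : br a (c • u) + lam • (a * (c • u)) = c • (br a u + lam • (a * u)) := by
        rw [map_smul, Algebra.mul_smul_comm, smul_add, smul_comm lam c]
      rw [Polynomial.smul_monomial, rho_monomial, rho_monomial, h, ← Polynomial.smul_C,
        Algebra.smul_mul_assoc, smul_comm]

lemma rho_mul_X (br : P →ₗ[k] P →ₗ[k] P) (i : ℕ) (a : P) (lam : k) (p : Polynomial P) :
    rhoConf br i a lam (p * Polynomial.X) =
      rhoConf br i a lam p * (Polynomial.X + Polynomial.C (algebraMap k P lam)) := by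
  induction p using Polynomial.induction_on' with
  | add p q hp hq => rw [add_mul, rho_add, rho_add, hp, hq, add_mul]
  | monomial m u =>
      rw [Polynomial.monomial_mul_X, rho_monomial, rho_monomial, smul_mul_assoc,
        mul_assoc, ← pow_succ]

lemma rho_shift (br : P →ₗ[k] P →ₗ[k] P) (j : ℕ) (b : P) (mu c : k) (m : ℕ) (u : P) :
    rhoConf br j b mu
        (Polynomial.C u * (Polynomial.X + Polynomial.C (algebraMap k P c)) ^ m) =
      (-mu) ^ j • (Polynomial.C (br b u + mu • (b * u)) *
        (Polynomial.X + Polynomial.C (algebraMap k P (c + mu))) ^ m) := by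
  induction m with
  | zero => simpa using rho_monomial br j b mu 0 u
  | succ m ih =>
      have hsplit : Polynomial.C u *
            (Polynomial.X + Polynomial.C (algebraMap k P c)) ^ (m + 1)
          = (Polynomial.C u * (Polynomial.X + Polynomial.C (algebraMap k P c)) ^ m)
              * Polynomial.X
            + c • (Polynomial.C u *
                (Polynomial.X + Polynomial.C (algebraMap k P c)) ^ m) := by
        rw [pow_succ, ← mul_assoc, mul_add]
        congr 1
        rw [Algebra.smul_def, Polynomial.algebraMap_apply, mul_comm]
      rw [hsplit, rho_add, rho_mul_X, rho_smul, ih, smul_mul_assoc, smul_comm c, ← smul_add]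
      congr 1
      rw [Algebra.smul_def (A := Polynomial P) c, Polynomial.algebraMap_apply]
      simp only [map_add, Polynomial.C_add]
      ring

end Aux

/-- For all `i j : ℕ`, `a b : P`, `λ μ : k` and every `w ∈ M = P[X]`,
`ρ_λ(i,a)(ρ_μ(j,b)(w)) − ρ_μ(j,b)(ρ_λ(i,a)(w)) = (−λ)^i·(−μ)^j·ρ_{λ+μ}(0,{a,b})(w)`:
the conformal-module Jacobi identity for `x = ∂^i a`, `y = ∂^j b` in `Cur L` acting on `H ⊗ P`,
showing that `H ⊗ P` is a conformal module over `Cur L`. -/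
theorem poisson_current_conformal_module
    {k : Type*} [Field k] [CharZero k]
    {P : Type*} [CommRing P] [Algebra k P]
    (br : P →ₗ[k] P →ₗ[k] P)
    (anti : ∀ x y : P, br x y = - br y x)
    (jacobi : ∀ x y z : P, br x (br y z) - br y (br x z) = br (br x y) z)
    (leibniz : ∀ x y z : P, br x (y * z) = y * br x z + z * br x y)
    (i j : ℕ) (a b : P) (lam mu : k) (w : Polynomial P) :
    rhoConf br i a lam (rhoConf br j b mu w) - rhoConf br j b mu (rhoConf br i a lam w)
      = ((-lam) ^ i * (-mu) ^ j) • rhoConf br 0 (br a b) (lam + mu) w := by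
  have key : ∀ u : P,
      br a (br b u + mu • (b * u)) + lam • (a * (br b u + mu • (b * u)))
        - (br b (br a u + lam • (a * u)) + mu • (b * (br a u + lam • (a * u))))
      = br (br a b) u + (lam + mu) • (br a b * u) := by
    intro u
    rw [← jacobi a b u]
    simp only [map_add, map_smul]
    simp only [leibniz, anti b a]
    simp only [Algebra.smul_def, mul_add, mul_neg, map_add]
    ring
  induction w using Polynomial.induction_on' with
  | add p q hp hq =>
      simp only [rho_add, smul_add]
      rw [← hp, ← hq]; ring
  | monomial m u =>
      simp only [rho_monomial, rho_smul, rho_shift, pow_zero, one_smul]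
      rw [add_comm mu lam, smul_smul, smul_smul, mul_comm ((-mu) ^ j), ← smul_sub,
        ← sub_mul, ← Polynomial.C_sub, key u]
end

section
/- Let P be a Poisson algebra over k. For all a, b, w ∈ P and every μ ∈ k there exist p₀, p₁, p₂ ∈ P such that for every λ ∈ k, ρ_λ(a)(ρ_{μ−λ}(b)(w)) = p₀ + λ·p₁ + λ²·p₂; that is, the λ-product of the conformal endomorphisms ρ(a) and ρ(b) is a polynomial in λ of degree at most 2, so the locality level of ρ(a) and ρ(b) is N = 3. -/
/-- In a Poisson algebra `P` over a field `k` of characteristic zero,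
for all `a b w : P` and every `μ : k`, there exist `p₀ p₁ p₂ : P` such that for every `λ : k`,
`ρ_λ(a)(ρ_{μ−λ}(b)(w)) = p₀ + λ·p₁ + λ²·p₂`, where `ρ_λ(a)(w) = {a,w} + λ·(a·w)`;
i.e. the λ-product of the conformal endomorphisms `ρ(a)` and `ρ(b)` is a polynomial in `λ`
of degree at most 2 (locality level `N = 3`). -/
theorem poisson_conformal_locality_three
    {k : Type*} [Field k] [CharZero k]
    {P : Type*} [CommRing P] [Algebra k P]
    (br : P →ₗ[k] P →ₗ[k] P)
    (anti : ∀ x y : P, br x y = - br y x)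
    (jacobi : ∀ x y z : P, br x (br y z) - br y (br x z) = br (br x y) z)
    (leibniz : ∀ x y z : P, br x (y * z) = y * br x z + z * br x y)
    (a b w : P) (mu : k) :
    ∃ p₀ p₁ p₂ : P, ∀ lam : k,
      br a (br b w + (mu - lam) • (b * w)) + lam • (a * (br b w + (mu - lam) • (b * w)))
        = p₀ + lam • p₁ + lam ^ 2 • p₂ := by
  refine ⟨br a (br b w) + mu • br a (b * w),
    a * br b w + mu • (a * (b * w)) - br a (b * w), -(a * (b * w)), fun lam => ?_⟩
  have h1 : br a ((mu - lam) • (b * w)) = (mu - lam) • br a (b * w) := map_smul _ _ _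
  rw [map_add, h1, pow_two]
  rw [show a * (br b w + (mu - lam) • (b * w)) = a * br b w + (mu - lam) • (a * (b * w)) by
    rw [mul_add, mul_smul_comm]]
  module
end

section
/- The monomials d^s · l(n₁,x₁)⋯l(n_k,x_k) · r(m₁,z₁)⋯r(m_p,z_p), where s, k, p range over ℕ (empty products allowed), n_i, m_j ∈ ℕ and x_i, z_j ∈ X, form a k-basis of the algebra A(X). (Equivalently, the defining relations of A(X) form a Gröbner–Shirshov basis.) -/
/-- Generators of the algebra `A(X)`: `d`, and `l(n,a)`, `r(n,a)` for `n ∈ ℕ`, `a ∈ X`. -/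
inductive AGen (X : Type*) where
  | d : AGen X
  | l (n : ℕ) (a : X) : AGen X
  | r (n : ℕ) (a : X) : AGen X

/-- Defining relations of `A(X)`: `l(n,a)·d = d·l(n,a) + n·l(n−1,a)`,
`r(n,a)·d = d·r(n,a) + n·r(n−1,a)` (with `l(−1,a) = r(−1,a) = 0`, which is automatic here
since the coefficient `n` vanishes when `n = 0`), and `r(n,a)·l(m,b) = l(m,b)·r(n,a)`. -/
inductive ARel (k : Type*) [CommRing k] (X : Type*) :
    FreeAlgebra k (AGen X) → FreeAlgebra k (AGen X) → Prop
  | ld (n : ℕ) (a : X) :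
      ARel k X (FreeAlgebra.ι k (AGen.l n a) * FreeAlgebra.ι k AGen.d)
        (FreeAlgebra.ι k AGen.d * FreeAlgebra.ι k (AGen.l n a) +
          n • FreeAlgebra.ι k (AGen.l (n - 1) a))
  | rd (n : ℕ) (a : X) :
      ARel k X (FreeAlgebra.ι k (AGen.r n a) * FreeAlgebra.ι k AGen.d)
        (FreeAlgebra.ι k AGen.d * FreeAlgebra.ι k (AGen.r n a) +
          n • FreeAlgebra.ι k (AGen.r (n - 1) a))
  | rl (n m : ℕ) (a b : X) :
      ARel k X (FreeAlgebra.ι k (AGen.r n a) * FreeAlgebra.ι k (AGen.l m b))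
        (FreeAlgebra.ι k (AGen.l m b) * FreeAlgebra.ι k (AGen.r n a))

/-- The algebra `A(X)` presented by the generators `AGen X` and relations `ARel k X`. -/
abbrev AAlg (k : Type*) [CommRing k] (X : Type*) := RingQuot (ARel k X)


/-!
Using the relations, every `d` can be moved to the left of the `l`'s and `r`'s, by
`l(n,a)·d^s = ∑ᵢ C(s,i)·n(n-1)⋯(n-i+1)·d^(s-i)·l(n-i,a)` (and likewise for `r`), and every `r`
to the right of every `l`; hence the monomials span. For independence, let `A(X)` act on the free
module with basis the labels `(s, L, R)` of the monomials, by the operators these rewriting rules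
dictate: `d` raises `s`, while `l(n,a)` and `r(n,a)` act by the expansion above and prepend to `L`
resp. `R`. These operators satisfy the defining relations (by Pascal's rule for the coefficients,
and a trinomial symmetry for `r·l = l·r`), and the monomial labelled `w` sends `(0, [], [])` to
the basis vector `w`.
-/

open Finset

section LeibnizSum

variable {M N : Type*} [AddCommMonoid M] [AddCommMonoid N]

/-- The normal form of `l(n,a)·d^s` (see `mul_pow_eq_leibnizSum`). Terms with `i > n` vanish since
`n.descFactorial i = 0`, so the truncated `n - i` does no harm. -/
def leibnizSum (s n : ℕ) (G : ℕ → ℕ → M) : M :=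
  ∑ p ∈ antidiagonal s, (s.choose p.1 * n.descFactorial p.1) • G p.2 (n - p.1)

@[simp] lemma leibnizSum_zero (n : ℕ) (G : ℕ → ℕ → M) : leibnizSum 0 n G = G 0 n := by
  simp [leibnizSum]

lemma leibnizSum_succ (s n : ℕ) (G : ℕ → ℕ → M) :
    leibnizSum (s + 1) n G =
      leibnizSum s n (fun t m => G (t + 1) m) + leibnizSum s n (fun t m => m • G t (m - 1)) := by
  simp only [leibnizSum, mul_smul]
  rw [sum_antidiagonal_choose_succ_nsmul (fun i t => n.descFactorial i • G t (n - i))]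
  congr 1
  refine sum_congr rfl fun p hp => ?_
  rw [HasAntidiagonal.mem_antidiagonal] at hp
  rw [← hp, Nat.choose_symm_add, hp, Nat.descFactorial_succ, mul_comm, mul_smul, Nat.sub_sub]

lemma leibnizSum_nsmul_pred (s n : ℕ) (G : ℕ → ℕ → M) :
    leibnizSum s n (fun t m => m • G t (m - 1)) = n • leibnizSum s (n - 1) G := by
  simp only [leibnizSum, smul_sum, smul_smul]
  refine sum_congr rfl fun p _ => ?_
  congr 1
  · cases n with
    | zero => simp
    | succ n =>
      rw [add_tsub_cancel_right, mul_comm _ (n + 1 - p.1), ← mul_assoc,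
        mul_comm (n + 1 - p.1), mul_assoc, ← Nat.descFactorial_succ, Nat.succ_descFactorial_succ]
      ring
  · rw [Nat.sub_right_comm]

lemma leibnizSum_add (s n : ℕ) (G H : ℕ → ℕ → M) :
    leibnizSum s n (fun t m => G t m + H t m) = leibnizSum s n G + leibnizSum s n H := by
  simp only [leibnizSum, smul_add, sum_add_distrib]

lemma leibnizSum_nsmul (s n c : ℕ) (G : ℕ → ℕ → M) :
    leibnizSum s n (fun t m => c • G t m) = c • leibnizSum s n G := by
  simp only [leibnizSum, smul_sum, smul_comm c]

lemma map_leibnizSum (f : M →+ N) (s n : ℕ) (G : ℕ → ℕ → M) :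
    f (leibnizSum s n G) = leibnizSum s n (fun t m => f (G t m)) := by
  simp only [leibnizSum, map_sum, map_nsmul]

lemma leibnizSum_mem {S : Type*} [SetLike S M] [AddSubmonoidClass S M] {T : S} (s n : ℕ)
    {G : ℕ → ℕ → M} (hG : ∀ t m, G t m ∈ T) : leibnizSum s n G ∈ T :=
  sum_mem fun _ _ => nsmul_mem (hG _ _) _

lemma leibnizSum_comm (s m n : ℕ) (H : ℕ → ℕ → ℕ → M) :
    leibnizSum s m (fun t a => leibnizSum t n fun u b => H u a b) =
      leibnizSum s n (fun t b => leibnizSum t m fun u a => H u a b) := by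
  induction s generalizing H with
  | zero => simp
  | succ s ih =>
    simp only [leibnizSum_succ, leibnizSum_add, ← leibnizSum_nsmul]
    rw [ih, ih (fun u a b => b • H u a (b - 1)), ih (fun u a b => a • H u (a - 1) b)]
    abel

end LeibnizSum

lemma leibnizSum_mul {A : Type*} [Semiring A] (s n : ℕ) (G : ℕ → ℕ → A) (x : A) :
    leibnizSum s n G * x = leibnizSum s n fun t m => G t m * x :=
  map_leibnizSum (AddMonoidHom.mulRight x) s n G

lemma mul_pow_eq_leibnizSum {A : Type*} [Semiring A] {d : A} {f : ℕ → A}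
    (hf : ∀ n, f n * d = d * f n + n • f (n - 1)) (s n : ℕ) :
    f n * d ^ s = leibnizSum s n fun t m => d ^ t * f m := by
  induction s with
  | zero => simp
  | succ s ih =>
    have step : ∀ t m, d ^ t * f m * d = d ^ (t + 1) * f m + m • (d ^ t * f (m - 1)) := by
      intro t m
      rw [mul_assoc, hf, mul_add, ← mul_assoc, ← pow_succ, mul_smul_comm]
    simp only [pow_succ, ← mul_assoc, ih, leibnizSum_mul, step, leibnizSum_add, leibnizSum_succ]

section LeibnizOp

variable (k : Type*) [CommSemiring k] {P : Type*}

noncomputable def shiftOp : Module.End k (ℕ × P →₀ k) :=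
  Finsupp.lmapDomain k k fun w => (w.1 + 1, w.2)

noncomputable def leibnizOp (g : ℕ → P → P) (n : ℕ) : Module.End k (ℕ × P →₀ k) :=
  Finsupp.lift _ k _ fun w => leibnizSum w.1 n fun t m => Finsupp.single (t, g m w.2) 1

variable {k}

@[simp] lemma shiftOp_single (s : ℕ) (p : P) (c : k) :
    shiftOp k (Finsupp.single (s, p) c) = Finsupp.single (s + 1, p) c := by
  simp [shiftOp]

lemma shiftOp_pow_single (s t : ℕ) (p : P) :
    (shiftOp k ^ s) (Finsupp.single (t, p) 1) = Finsupp.single (t + s, p) (1 : k) := by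
  induction s with
  | zero => simp
  | succ s ih => rw [pow_succ', Module.End.mul_apply, ih, shiftOp_single, add_assoc]

lemma leibnizOp_single (g : ℕ → P → P) (n s : ℕ) (p : P) :
    leibnizOp k g n (Finsupp.single (s, p) 1) =
      leibnizSum s n fun t m => Finsupp.single (t, g m p) 1 := by
  simp [leibnizOp]

lemma leibnizOp_single_zero (g : ℕ → P → P) (n : ℕ) (p : P) :
    leibnizOp k g n (Finsupp.single (0, p) 1) = Finsupp.single (0, g n p) (1 : k) := by
  rw [leibnizOp_single, leibnizSum_zero]

lemma leibnizOp_mul_shiftOp (g : ℕ → P → P) (n : ℕ) :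
    leibnizOp k g n * shiftOp k = shiftOp k * leibnizOp k g n + n • leibnizOp k g (n - 1) := by
  ext ⟨s, p⟩ : 2
  simp only [LinearMap.comp_apply, Finsupp.lsingle_apply, Module.End.mul_apply,
    LinearMap.add_apply, LinearMap.smul_apply, shiftOp_single, leibnizOp_single, leibnizSum_succ]
  rw [← LinearMap.toAddMonoidHom_coe, map_leibnizSum, ← leibnizSum_nsmul_pred]
  simp

lemma leibnizOp_mul_comm {g h : ℕ → P → P} (hgh : ∀ m m' p, g m (h m' p) = h m' (g m p))
    (n m : ℕ) : leibnizOp k g n * leibnizOp k h m = leibnizOp k h m * leibnizOp k g n := by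
  ext ⟨s, p⟩ : 2
  simp only [LinearMap.comp_apply, Finsupp.lsingle_apply, Module.End.mul_apply, leibnizOp_single]
  rw [← LinearMap.toAddMonoidHom_coe, map_leibnizSum, ← LinearMap.toAddMonoidHom_coe,
    map_leibnizSum]
  simp only [LinearMap.toAddMonoidHom_coe, leibnizOp_single, hgh]
  exact leibnizSum_comm s m n _

end LeibnizOp

namespace AAlg

variable (k : Type*) [CommRing k] {X : Type*}

noncomputable abbrev ofGen (g : AGen X) : AAlg k X :=
  RingQuot.mkAlgHom k (ARel k X) (FreeAlgebra.ι k g)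

variable (X) in
noncomputable def monomial (w : ℕ × List (ℕ × X) × List (ℕ × X)) : AAlg k X :=
  ofGen k AGen.d ^ w.1 * (w.2.1.map fun p => ofGen k (AGen.l p.1 p.2)).prod *
    (w.2.2.map fun p => ofGen k (AGen.r p.1 p.2)).prod

variable {k}

lemma l_mul_d (n : ℕ) (a : X) :
    ofGen k (.l n a) * ofGen k .d =
      ofGen k .d * ofGen k (.l n a) + n • ofGen k (.l (n - 1) a) := by
  simpa only [map_mul, map_add, map_nsmul] using RingQuot.mkAlgHom_rel k (ARel.ld n a)

lemma r_mul_d (n : ℕ) (a : X) :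
    ofGen k (.r n a) * ofGen k .d =
      ofGen k .d * ofGen k (.r n a) + n • ofGen k (.r (n - 1) a) := by
  simpa only [map_mul, map_add, map_nsmul] using RingQuot.mkAlgHom_rel k (ARel.rd n a)

lemma r_mul_l (n m : ℕ) (a b : X) :
    ofGen k (.r n a) * ofGen k (.l m b) = ofGen k (.l m b) * ofGen k (.r n a) := by
  simpa only [map_mul] using RingQuot.mkAlgHom_rel k (ARel.rl n m a b)

lemma r_mul_prod_l (n : ℕ) (a : X) (L : List (ℕ × X)) :
    ofGen k (.r n a) * (L.map fun p => ofGen k (.l p.1 p.2)).prod =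
      (L.map fun p => ofGen k (.l p.1 p.2)).prod * ofGen k (.r n a) := by
  induction L with
  | nil => simp
  | cons p L ih =>
    rw [List.map_cons, List.prod_cons, ← mul_assoc, r_mul_l, mul_assoc, ih, ← mul_assoc]

lemma d_mul_monomial (s : ℕ) (L R : List (ℕ × X)) :
    ofGen k .d * monomial k X (s, L, R) = monomial k X (s + 1, L, R) := by
  simp only [monomial, ← mul_assoc, ← pow_succ']

lemma l_mul_monomial (n : ℕ) (a : X) (s : ℕ) (L R : List (ℕ × X)) :
    ofGen k (.l n a) * monomial k X (s, L, R) =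
      leibnizSum s n fun t m => monomial k X (t, (m, a) :: L, R) := by
  simp only [monomial, ← mul_assoc, mul_pow_eq_leibnizSum (fun n => l_mul_d n a), leibnizSum_mul,
    List.map_cons, List.prod_cons]

lemma r_mul_monomial (n : ℕ) (a : X) (s : ℕ) (L R : List (ℕ × X)) :
    ofGen k (.r n a) * monomial k X (s, L, R) =
      leibnizSum s n fun t m => monomial k X (t, L, (m, a) :: R) := by
  simp only [monomial, ← mul_assoc, mul_pow_eq_leibnizSum (fun n => r_mul_d n a), leibnizSum_mul,
    List.map_cons, List.prod_cons]
  congr! 3 with t m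
  rw [mul_assoc (_ ^ t), r_mul_prod_l, ← mul_assoc]

lemma ofGen_mul_mem_span_monomial (g : AGen X) {v : AAlg k X}
    (hv : v ∈ Submodule.span k (Set.range (monomial k X))) :
    ofGen k g * v ∈ Submodule.span k (Set.range (monomial k X)) := by
  have hmem : ∀ w, monomial k X w ∈ Submodule.span k (Set.range (monomial k X)) :=
    fun w => Submodule.subset_span ⟨w, rfl⟩
  induction hv using Submodule.span_induction with
  | mem u hu =>
    obtain ⟨⟨s, L, R⟩, rfl⟩ := hu
    cases g with
    | d => rw [d_mul_monomial]; exact hmem _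
    | l n a => rw [l_mul_monomial]; exact leibnizSum_mem s n fun _ _ => hmem _
    | r n a => rw [r_mul_monomial]; exact leibnizSum_mem s n fun _ _ => hmem _
  | zero => rw [mul_zero]; exact zero_mem _
  | add x y _ _ hx hy => rw [mul_add]; exact add_mem hx hy
  | smul c x _ hx => rw [mul_smul_comm]; exact Submodule.smul_mem _ c hx

lemma mul_mem_span_monomial (x : AAlg k X) {v : AAlg k X}
    (hv : v ∈ Submodule.span k (Set.range (monomial k X))) :
    x * v ∈ Submodule.span k (Set.range (monomial k X)) := by
  obtain ⟨x, rfl⟩ := RingQuot.mkAlgHom_surjective k (ARel k X) x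
  induction x using FreeAlgebra.induction generalizing v with
  | grade0 c => rw [AlgHom.commutes, ← Algebra.smul_def]; exact Submodule.smul_mem _ c hv
  | grade1 g => exact ofGen_mul_mem_span_monomial g hv
  | mul a b ha hb => rw [map_mul, mul_assoc]; exact ha (hb hv)
  | add a b ha hb => rw [map_add, add_mul]; exact add_mem (ha hv) (hb hv)

lemma monomial_zero_nil_nil : monomial k X (0, [], []) = 1 := by
  simp [monomial]

lemma span_monomial : Submodule.span k (Set.range (monomial k X)) = ⊤ := by
  refine eq_top_iff.2 fun x _ => mul_one x ▸ mul_mem_span_monomial x ?_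
  exact monomial_zero_nil_nil (k := k) (X := X) ▸ Submodule.subset_span ⟨_, rfl⟩

section Representation

variable (k X) in
noncomputable def genOp : AGen X → Module.End k (ℕ × List (ℕ × X) × List (ℕ × X) →₀ k)
  | .d => shiftOp k
  | .l n a => leibnizOp k (fun m p => ((m, a) :: p.1, p.2)) n
  | .r n a => leibnizOp k (fun m p => (p.1, (m, a) :: p.2)) n

lemma lift_genOp_rel ⦃x y : FreeAlgebra k (AGen X)⦄ (h : ARel k X x y) :
    FreeAlgebra.lift k (genOp k X) x = FreeAlgebra.lift k (genOp k X) y := by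
  cases h with
  | ld n a => simpa [genOp] using leibnizOp_mul_shiftOp _ n
  | rd n a => simpa [genOp] using leibnizOp_mul_shiftOp _ n
  | rl n m a b =>
    simp only [map_mul, FreeAlgebra.lift_ι_apply, genOp]
    exact leibnizOp_mul_comm (g := fun m p => (p.1, (m, a) :: p.2))
      (h := fun m p => ((m, b) :: p.1, p.2)) (fun _ _ _ => rfl) n m

variable (k X) in
noncomputable def normalFormRep :
    AAlg k X →ₐ[k] Module.End k (ℕ × List (ℕ × X) × List (ℕ × X) →₀ k) :=
  RingQuot.liftAlgHom k ⟨FreeAlgebra.lift k (genOp k X), lift_genOp_rel⟩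

lemma normalFormRep_ofGen (g : AGen X) : normalFormRep k X (ofGen k g) = genOp k X g := by
  simp [normalFormRep]

lemma normalFormRep_prod_l_single (L L₀ R₀ : List (ℕ × X)) :
    normalFormRep k X (L.map fun p => ofGen k (.l p.1 p.2)).prod
        (Finsupp.single (0, L₀, R₀) 1) =
      Finsupp.single (0, L ++ L₀, R₀) 1 := by
  induction L with
  | nil => simp
  | cons p L ih =>
    rw [List.map_cons, List.prod_cons, map_mul, Module.End.mul_apply, ih, normalFormRep_ofGen,
      genOp, leibnizOp_single_zero, List.cons_append]

lemma normalFormRep_prod_r_single (R L₀ R₀ : List (ℕ × X)) :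
    normalFormRep k X (R.map fun p => ofGen k (.r p.1 p.2)).prod
        (Finsupp.single (0, L₀, R₀) 1) =
      Finsupp.single (0, L₀, R ++ R₀) 1 := by
  induction R with
  | nil => simp
  | cons p R ih =>
    rw [List.map_cons, List.prod_cons, map_mul, Module.End.mul_apply, ih, normalFormRep_ofGen,
      genOp, leibnizOp_single_zero, List.cons_append]

lemma normalFormRep_monomial_single (w : ℕ × List (ℕ × X) × List (ℕ × X)) :
    normalFormRep k X (monomial k X w) (Finsupp.single (0, [], []) 1) = Finsupp.single w 1 := by
  obtain ⟨s, L, R⟩ := w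
  rw [monomial, map_mul, map_mul, map_pow, Module.End.mul_apply, Module.End.mul_apply,
    normalFormRep_prod_r_single, normalFormRep_prod_l_single, normalFormRep_ofGen, genOp,
    shiftOp_pow_single]
  simp

lemma linearIndependent_monomial : LinearIndependent k (monomial k X) := by
  refine LinearIndependent.of_comp
    (LinearMap.applyₗ (Finsupp.single (0, [], []) 1) ∘ₗ (normalFormRep k X).toLinearMap) ?_
  convert Finsupp.linearIndependent_single_one k (ℕ × List (ℕ × X) × List (ℕ × X)) with w
  exact normalFormRep_monomial_single w

end Representation

end AAlg

/-- The monomials `d^s · l(n₁,x₁)⋯l(n_k,x_k) · r(m₁,z₁)⋯r(m_p,z_p)`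
(`s, k, p ∈ ℕ`, empty products allowed, `nᵢ, mⱼ ∈ ℕ`, `xᵢ, zⱼ ∈ X`) form a `k`-basis of
`A(X)`; equivalently, the defining relations of `A(X)` form a Gröbner–Shirshov basis. -/
theorem AAlg_basis (k : Type*) [Field k] (X : Type*) :
    LinearIndependent k
      (fun w : ℕ × List (ℕ × X) × List (ℕ × X) =>
        (RingQuot.mkAlgHom k (ARel k X) (FreeAlgebra.ι k AGen.d)) ^ w.1 *
          (w.2.1.map fun p =>
            RingQuot.mkAlgHom k (ARel k X) (FreeAlgebra.ι k (AGen.l p.1 p.2))).prod *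
          (w.2.2.map fun p =>
            RingQuot.mkAlgHom k (ARel k X) (FreeAlgebra.ι k (AGen.r p.1 p.2))).prod) ∧
    Submodule.span k
      (Set.range
        (fun w : ℕ × List (ℕ × X) × List (ℕ × X) =>
          (RingQuot.mkAlgHom k (ARel k X) (FreeAlgebra.ι k AGen.d)) ^ w.1 *
            (w.2.1.map fun p =>
              RingQuot.mkAlgHom k (ARel k X) (FreeAlgebra.ι k (AGen.l p.1 p.2))).prod *
            (w.2.2.map fun p =>
              RingQuot.mkAlgHom k (ARel k X) (FreeAlgebra.ι k (AGen.r p.1 p.2))).prod))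
      = (⊤ : Submodule k (AAlg k X)) :=
  ⟨AAlg.linearIndependent_monomial, AAlg.span_monomial⟩
end

section
/- If X ⊆ Z are sets, then the k-algebra homomorphism A(X) → A(Z) induced by the inclusion of generators (d ↦ d, l(n,a) ↦ l(n,a), r(n,a) ↦ r(n,a) for a ∈ X) is injective; that is, A(X) embeds as a subalgebra of A(Z). -/
/-- The image of a generator in `A(X)`. -/
noncomputable def AAlg.gen (k : Type*) [CommRing k] {X : Type*} (g : AGen X) : AAlg k X :=
  RingQuot.mkAlgHom k (ARel k X) (FreeAlgebra.ι k g)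

/-! Not only maps but also partial maps `X → Option Z` of index sets induce algebra maps
`A(X) → A(Z)`, sending the generators indexed by points outside the domain to `0`: every
relation is homogeneous in the generators indexed by each point, so killing all of them respects
it. This is functorial, so for injective `f` the partial inverse of `f` induces a left inverse of
the map induced by `f`. -/

open Function

namespace AAlg

variable (k : Type*) [CommRing k] {X Y Z : Type*}

theorem gen_l_mul_gen_d (n : ℕ) (a : X) :
    gen k (AGen.l n a) * gen k AGen.d =
      gen k AGen.d * gen k (AGen.l n a) + n • gen k (AGen.l (n - 1) a) := by
  simpa [gen] using RingQuot.mkAlgHom_rel k (ARel.ld n a)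

theorem gen_r_mul_gen_d (n : ℕ) (a : X) :
    gen k (AGen.r n a) * gen k AGen.d =
      gen k AGen.d * gen k (AGen.r n a) + n • gen k (AGen.r (n - 1) a) := by
  simpa [gen] using RingQuot.mkAlgHom_rel k (ARel.rd n a)

theorem gen_r_mul_gen_l (n m : ℕ) (a b : X) :
    gen k (AGen.r n a) * gen k (AGen.l m b) = gen k (AGen.l m b) * gen k (AGen.r n a) := by
  simpa [gen] using RingQuot.mkAlgHom_rel k (ARel.rl n m a b)

noncomputable def filterMapGen (g : X → Option Z) : AGen X → AAlg k Z
  | AGen.d => gen k AGen.d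
  | AGen.l n a => (g a).elim 0 fun b => gen k (AGen.l n b)
  | AGen.r n a => (g a).elim 0 fun b => gen k (AGen.r n b)

noncomputable def filterMap (g : X → Option Z) : AAlg k X →ₐ[k] AAlg k Z :=
  RingQuot.liftAlgHom k ⟨FreeAlgebra.lift k (filterMapGen k g), by
    intro x y hxy
    cases hxy with
    | ld n a =>
      simp only [map_mul, map_add, map_nsmul, FreeAlgebra.lift_ι_apply, filterMapGen]
      rcases g a with _ | b
      · simp
      · exact gen_l_mul_gen_d k n b
    | rd n a =>
      simp only [map_mul, map_add, map_nsmul, FreeAlgebra.lift_ι_apply, filterMapGen]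
      rcases g a with _ | b
      · simp
      · exact gen_r_mul_gen_d k n b
    | rl n m a b =>
      simp only [map_mul, FreeAlgebra.lift_ι_apply, filterMapGen]
      rcases g a with _ | a' <;> rcases g b with _ | b' <;>
        simp only [Option.elim, zero_mul, mul_zero]
      exact gen_r_mul_gen_l k n m a' b'⟩

@[simp]
theorem filterMap_gen (g : X → Option Z) (x : AGen X) :
    filterMap k g (gen k x) = filterMapGen k g x := by
  simp [filterMap, gen, RingQuot.liftAlgHom_mkAlgHom_apply]

theorem filterMap_comp (f : X → Option Y) (g : Y → Option Z) :
    (filterMap k g).comp (filterMap k f) = filterMap k fun a => (f a).bind g := by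
  apply RingQuot.ringQuot_ext'
  apply FreeAlgebra.hom_ext
  funext x
  change filterMap k g (filterMap k f (gen k x)) = filterMap k _ (gen k x)
  cases x with
  | d => simp [filterMapGen]
  | l n a => rcases hfa : f a with _ | b <;> simp [filterMapGen, hfa]
  | r n a => rcases hfa : f a with _ | b <;> simp [filterMapGen, hfa]

theorem filterMap_some : filterMap k (some : X → Option X) = AlgHom.id k (AAlg k X) := by
  apply RingQuot.ringQuot_ext'
  apply FreeAlgebra.hom_ext
  funext x
  change filterMap k some (gen k x) = gen k x
  cases x <;> simp [filterMapGen]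

noncomputable def map (f : X → Z) : AAlg k X →ₐ[k] AAlg k Z :=
  filterMap k fun a => some (f a)

@[simp]
theorem map_gen_d (f : X → Z) : map k f (gen k AGen.d) = gen k AGen.d := by
  simp [map, filterMapGen]

@[simp]
theorem map_gen_l (f : X → Z) (n : ℕ) (a : X) :
    map k f (gen k (AGen.l n a)) = gen k (AGen.l n (f a)) := by
  simp [map, filterMapGen]

@[simp]
theorem map_gen_r (f : X → Z) (n : ℕ) (a : X) :
    map k f (gen k (AGen.r n a)) = gen k (AGen.r n (f a)) := by
  simp [map, filterMapGen]

theorem map_injective {f : X → Z} (hf : Injective f) : Injective (map k f) := by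
  classical
  have hret : (filterMap k (partialInv f)).comp (map k f) = AlgHom.id k (AAlg k X) := by
    rw [map, filterMap_comp]
    simpa [partialInv_left hf] using filterMap_some k
  exact LeftInverse.injective (g := filterMap k (partialInv f)) (AlgHom.congr_fun hret)

end AAlg

/-- If `X ⊆ Z` are sets, then the `k`-algebra homomorphism `A(X) → A(Z)`
induced by the inclusion of generators (`d ↦ d`, `l(n,a) ↦ l(n,a)`, `r(n,a) ↦ r(n,a)` for
`a ∈ X`) is injective; that is, `A(X)` embeds as a subalgebra of `A(Z)`. -/
theorem AAlg_inclusion_injective (k : Type*) [Field k] {α : Type*} (X Z : Set α)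
    (h : X ⊆ Z) :
    ∃ φ : AAlg k X →ₐ[k] AAlg k Z,
      φ (AAlg.gen k AGen.d) = AAlg.gen k AGen.d ∧
      (∀ (n : ℕ) (a : X), φ (AAlg.gen k (AGen.l n a)) = AAlg.gen k (AGen.l n (Set.inclusion h a))) ∧
      (∀ (n : ℕ) (a : X), φ (AAlg.gen k (AGen.r n a)) = AAlg.gen k (AGen.r n (Set.inclusion h a))) ∧
      Function.Injective φ :=
  ⟨AAlg.map k (Set.inclusion h), AAlg.map_gen_d k _, AAlg.map_gen_l k _, AAlg.map_gen_r k _,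
    AAlg.map_injective k (Set.inclusion_injective h)⟩
end

section
/- In the module M one has, for every a ∈ g, every n ≥ 1, all b₁, …, b_n ∈ g and every s ≥ 0: L(0,a)·L(1,b₁)⋯L(1,b_n)·D^s·e = Σ_{i=1}^{n} L(1,b₁)⋯L(1,[a,b_i])⋯L(1,b_n)·D^s·e. (This is the second family of additional rewriting rules completing the defining relations of the split null extension U(Cur g, N=3) ⊕ (H ⊗ P(g)) to a Gröbner–Shirshov basis; it reflects the Leibniz rule of the Poisson bracket of P(g).) -/
set_option maxSynthPendingDepth 3

open scoped TensorProduct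

/-- Generators of the algebra `A`: `D`, `R(n)`, `L(n,a)` and `S(n,a)` (`n ∈ ℕ`, `a ∈ g`);
`S(n,a)` stands for the operator written `R_n^a` in the paper. -/
inductive UGen (g : Type*) where
  | D : UGen g
  | R (n : ℕ) : UGen g
  | L (n : ℕ) (a : g) : UGen g
  | S (n : ℕ) (a : g) : UGen g

/-- Defining relations of the algebra `A`: `a ↦ L(n,a)` and `a ↦ S(n,a)` are `k`-linear;
`L(n,a)D − D·L(n,a) = n·L(n−1,a)`, `S(n,a)D − D·S(n,a) = n·S(n−1,a)`,
`R(n)D − D·R(n) = n·R(n−1)` (with `L(−1,a) = S(−1,a) = R(−1) = 0`, which is automatic here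
since the coefficient `n` vanishes when `n = 0`); `S(m,a)` and `R(m)` commute with `L(n,b)`;
and `L(n,a)·L(m,b) − L(m,b)·L(n,a) = L(n+m,[a,b])`. -/
inductive URel (k : Type*) [CommRing k] (g : Type*) [LieRing g] [LieAlgebra k g] :
    FreeAlgebra k (UGen g) → FreeAlgebra k (UGen g) → Prop
  | L_add (n : ℕ) (a b : g) :
      URel k g (FreeAlgebra.ι k (UGen.L n (a + b)))
        (FreeAlgebra.ι k (UGen.L n a) + FreeAlgebra.ι k (UGen.L n b))
  | L_smul (n : ℕ) (c : k) (a : g) :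
      URel k g (FreeAlgebra.ι k (UGen.L n (c • a))) (c • FreeAlgebra.ι k (UGen.L n a))
  | S_add (n : ℕ) (a b : g) :
      URel k g (FreeAlgebra.ι k (UGen.S n (a + b)))
        (FreeAlgebra.ι k (UGen.S n a) + FreeAlgebra.ι k (UGen.S n b))
  | S_smul (n : ℕ) (c : k) (a : g) :
      URel k g (FreeAlgebra.ι k (UGen.S n (c • a))) (c • FreeAlgebra.ι k (UGen.S n a))
  | LD (n : ℕ) (a : g) :
      URel k g (FreeAlgebra.ι k (UGen.L n a) * FreeAlgebra.ι k UGen.D)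
        (FreeAlgebra.ι k UGen.D * FreeAlgebra.ι k (UGen.L n a) +
          n • FreeAlgebra.ι k (UGen.L (n - 1) a))
  | SD (n : ℕ) (a : g) :
      URel k g (FreeAlgebra.ι k (UGen.S n a) * FreeAlgebra.ι k UGen.D)
        (FreeAlgebra.ι k UGen.D * FreeAlgebra.ι k (UGen.S n a) +
          n • FreeAlgebra.ι k (UGen.S (n - 1) a))
  | RD (n : ℕ) :
      URel k g (FreeAlgebra.ι k (UGen.R n) * FreeAlgebra.ι k UGen.D)
        (FreeAlgebra.ι k UGen.D * FreeAlgebra.ι k (UGen.R n) +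
          n • FreeAlgebra.ι k (UGen.R (n - 1)))
  | SL (m n : ℕ) (a b : g) :
      URel k g (FreeAlgebra.ι k (UGen.S m a) * FreeAlgebra.ι k (UGen.L n b))
        (FreeAlgebra.ι k (UGen.L n b) * FreeAlgebra.ι k (UGen.S m a))
  | RL (m n : ℕ) (b : g) :
      URel k g (FreeAlgebra.ι k (UGen.R m) * FreeAlgebra.ι k (UGen.L n b))
        (FreeAlgebra.ι k (UGen.L n b) * FreeAlgebra.ι k (UGen.R m))
  | LL (n m : ℕ) (a b : g) :
      URel k g (FreeAlgebra.ι k (UGen.L n a) * FreeAlgebra.ι k (UGen.L m b))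
        (FreeAlgebra.ι k (UGen.L m b) * FreeAlgebra.ι k (UGen.L n a) +
          FreeAlgebra.ι k (UGen.L (n + m) ⁅a, b⁆))

variable (k : Type*) [Field k] [CharZero k] (g : Type*) [LieRing g] [LieAlgebra k g]

/-- The algebra `A` presented by the generators `UGen g` and the relations `URel k g`. -/
abbrev UAlg := RingQuot (URel k g)

/-- The generator `D` of `A`. -/
noncomputable def UD : UAlg k g := RingQuot.mkAlgHom k (URel k g) (FreeAlgebra.ι k UGen.D)

/-- The generator `R(n)` of `A`. -/
noncomputable def UR (n : ℕ) : UAlg k g :=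
  RingQuot.mkAlgHom k (URel k g) (FreeAlgebra.ι k (UGen.R n))

/-- The generator `L(n,a)` of `A`. -/
noncomputable def UL (n : ℕ) (a : g) : UAlg k g :=
  RingQuot.mkAlgHom k (URel k g) (FreeAlgebra.ι k (UGen.L n a))

/-- The generator `S(n,a)` of `A` (written `R_n^a` in the paper). -/
noncomputable def US (n : ℕ) (a : g) : UAlg k g :=
  RingQuot.mkAlgHom k (URel k g) (FreeAlgebra.ι k (UGen.S n a))

/-- The free `A`-module `A ⊗_k (g ⊕ k)`. -/
abbrev UM0 := UAlg k g ⊗[k] (g × k)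

/-- The generator of `A ⊗_k (g ⊕ k)` corresponding to `a ∈ g`. -/
noncomputable def Ugen (a : g) : UM0 k g := (1 : UAlg k g) ⊗ₜ[k] ((a, 0) : g × k)

/-- The generator `e` of `A ⊗_k (g ⊕ k)` corresponding to `1 ∈ k`. -/
noncomputable def Ue : UM0 k g := (1 : UAlg k g) ⊗ₜ[k] ((0, 1) : g × k)

/-- The generating relations of the submodule by which `A ⊗_k (g ⊕ k)` is factored to
obtain the module `M` (the split null extension `U(Cur g, N=3) ⊕ (H ⊗ P(g))`). -/
inductive UIsRel : UM0 k g → Prop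
  | r1 (n : ℕ) (hn : 3 ≤ n) (a b : g) : UIsRel (UL k g n a • Ugen k g b)
  | r2 (n : ℕ) (hn : 3 ≤ n) (a b : g) : UIsRel (US k g n a • Ugen k g b)
  | r3 (a : g) : UIsRel (UL k g 0 a • Ue k g)
  | r4 (n : ℕ) (hn : 2 ≤ n) (a : g) : UIsRel (UL k g n a • Ue k g)
  | r5 (m : ℕ) (a : g) : UIsRel (US k g m a • Ue k g)
  | r6 (m : ℕ) : UIsRel (UR k g m • Ue k g)
  | r7 (a b : g) : UIsRel (US k g 2 a • Ugen k g b - UL k g 2 a • Ugen k g b)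
  | r8 (a b : g) : UIsRel (US k g 1 a • Ugen k g b - UL k g 1 a • Ugen k g b)
  | r9 (a b : g) : UIsRel (US k g 0 a • Ugen k g b - UL k g 0 a • Ugen k g b + Ugen k g ⁅a, b⁆)
  | r10 (a : g) : UIsRel (UR k g 2 • Ugen k g a)
  | r11 (a : g) : UIsRel (UR k g 1 • Ugen k g a + UL k g 1 a • Ue k g)
  | r12 (a : g) : UIsRel (UR k g 0 • Ugen k g a + (UD k g * UL k g 1 a) • Ue k g)
  | r13 (a b : g) : UIsRel (UL k g 2 a • Ugen k g b - UL k g 2 b • Ugen k g a)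
  | r14 (a b : g) :
      UIsRel ((UD k g * UL k g 2 a) • Ugen k g b - UL k g 1 a • Ugen k g b -
        UL k g 1 b • Ugen k g a)
  | r15 (a b : g) :
      UIsRel ((UL k g 1 a * UD k g) • Ugen k g b - (UL k g 1 b * UD k g) • Ugen k g a -
        3 • (UL k g 0 a • Ugen k g b) + 3 • (UL k g 0 b • Ugen k g a) + 2 • Ugen k g ⁅a, b⁆)
  | r16 (s : ℕ) (hs : 2 ≤ s) (a b : g) :
      UIsRel ((UL k g 1 a * UD k g ^ s) • Ugen k g b - (UL k g 1 b * UD k g ^ s) • Ugen k g a +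
        (s + 2) • ((UL k g 0 b * UD k g ^ (s - 1)) • Ugen k g a) -
        (s + 2) • ((UL k g 0 a * UD k g ^ (s - 1)) • Ugen k g b) +
        2 • (UD k g ^ (s - 1) • Ugen k g ⁅a, b⁆))
  | r17 (a b c : g) : UIsRel ((UL k g 2 a * UL k g 2 b) • Ugen k g c)
  | r18 (a b c : g) :
      UIsRel ((UL k g 1 a * UL k g 2 b) • Ugen k g c - (UL k g 1 b * UL k g 2 c) • Ugen k g a)
  | r19 (a b c : g) :
      UIsRel ((UL k g 1 a * UL k g 2 b) • Ugen k g c - (UL k g 1 b * UL k g 2 a) • Ugen k g c)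
  | r20 (a b c : g) :
      UIsRel ((UL k g 1 a * UL k g 1 b) • Ugen k g c - (UL k g 1 c * UL k g 1 a) • Ugen k g b -
        (UL k g 0 b * UL k g 2 c) • Ugen k g a + (UL k g 0 c * UL k g 2 a) • Ugen k g b -
        UL k g 2 c • Ugen k g ⁅a, b⁆ - UL k g 2 a • Ugen k g ⁅c, b⁆)
  | r21 (a b c : g) :
      UIsRel ((UL k g 1 a * UL k g 1 b) • Ugen k g c - (UL k g 1 a * UL k g 1 c) • Ugen k g b -
        (UL k g 0 b * UL k g 2 a) • Ugen k g c + (UL k g 0 c * UL k g 2 a) • Ugen k g b -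
        UL k g 2 a • Ugen k g ⁅c, b⁆ - UL k g 2 b • Ugen k g ⁅c, a⁆ -
        UL k g 2 c • Ugen k g ⁅a, b⁆)
  | r22 (a b c : g) :
      UIsRel ((UL k g 0 a * UL k g 1 b) • Ugen k g c - (UL k g 0 a * UL k g 1 c) • Ugen k g b -
        (UL k g 0 b * UL k g 1 a) • Ugen k g c - (UL k g 0 c * UL k g 1 b) • Ugen k g a +
        (UL k g 0 b * UL k g 1 c) • Ugen k g a + (UL k g 0 c * UL k g 1 a) • Ugen k g b -
        UL k g 1 ⁅c, a⁆ • Ugen k g b - UL k g 1 ⁅a, b⁆ • Ugen k g c -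
        UL k g 1 ⁅b, c⁆ • Ugen k g a + UL k g 1 c • Ugen k g ⁅a, b⁆ +
        UL k g 1 a • Ugen k g ⁅b, c⁆ + UL k g 1 b • Ugen k g ⁅c, a⁆)

/-- The submodule of relations defining `M`. -/
noncomputable def Usub : Submodule (UAlg k g) (UM0 k g) :=
  Submodule.span (UAlg k g) {m | UIsRel k g m}

/-- The module `M`: the quotient of the free `A`-module `A ⊗_k (g ⊕ k)` by the submodule
generated by the defining relations. -/
abbrev UMod := UM0 k g ⧸ Usub k g

/-- The class of an element of `A ⊗_k (g ⊕ k)` in `M`. -/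
noncomputable def Umk : UM0 k g → UMod k g := Submodule.Quotient.mk

lemma UL0_mul_UL1 (a b : g) :
    UL k g 0 a * UL k g 1 b = UL k g 1 b * UL k g 0 a + UL k g 1 ⁅a, b⁆ := by
  have h := RingQuot.mkAlgHom_rel k (URel.LL (k := k) 0 1 a b)
  simpa [UL, map_mul, map_add] using h

lemma UL0_mul_UD (a : g) : UL k g 0 a * UD k g = UD k g * UL k g 0 a := by
  have h := RingQuot.mkAlgHom_rel k (URel.LD (k := k) 0 a)
  simpa [UL, UD, map_mul, map_add] using h

lemma UL0_mul_UD_pow (a : g) (s : ℕ) :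
    UL k g 0 a * UD k g ^ s = UD k g ^ s * UL k g 0 a := by
  induction s with
  | zero => simp
  | succ s ih =>
    rw [pow_succ, ← mul_assoc, ih, mul_assoc, UL0_mul_UD, ← mul_assoc, ← pow_succ]

lemma UL0_commutator (a : g) : ∀ (n : ℕ) (b : Fin n → g),
    UL k g 0 a * (List.ofFn fun i => UL k g 1 (b i)).prod =
      (List.ofFn fun i => UL k g 1 (b i)).prod * UL k g 0 a +
        ∑ i : Fin n,
          (List.ofFn fun j => UL k g 1 (if j = i then ⁅a, b j⁆ else b j)).prod := by
  intro n
  induction n with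
  | zero => intro b; simp
  | succ n ih =>
    intro b
    have h0 : ∀ c : Fin (n + 1) → g,
        (List.ofFn fun i => UL k g 1 (c i)).prod =
          UL k g 1 (c 0) * (List.ofFn fun i : Fin n => UL k g 1 (c i.succ)).prod := by
      intro c
      rw [List.ofFn_succ, List.prod_cons]
    rw [h0, Fin.sum_univ_succ]
    have h1 : (List.ofFn fun j : Fin (n + 1) =>
        UL k g 1 (if j = 0 then ⁅a, b j⁆ else b j)).prod =
          UL k g 1 ⁅a, b 0⁆ * (List.ofFn fun i : Fin n => UL k g 1 (b i.succ)).prod := by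
      rw [h0]
      simp [Fin.succ_ne_zero]
    have h2 : ∀ i : Fin n, (List.ofFn fun j : Fin (n + 1) =>
        UL k g 1 (if j = i.succ then ⁅a, b j⁆ else b j)).prod =
          UL k g 1 (b 0) *
            (List.ofFn fun j : Fin n =>
              UL k g 1 (if j = i then ⁅a, b j.succ⁆ else b j.succ)).prod := by
      intro i
      rw [h0]
      simp only [Fin.succ_inj]
      rw [if_neg (fun h => (Fin.succ_ne_zero i) h.symm)]
    rw [h1]
    simp only [h2]
    rw [← mul_assoc, UL0_mul_UL1, add_mul, mul_assoc, ih (fun i => b i.succ)]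
    rw [mul_add, Finset.mul_sum, ← mul_assoc]
    abel

lemma Umk_UL0_zero (a : g) (x : UAlg k g) : Umk k g ((x * UL k g 0 a) • Ue k g) = 0 := by
  have hmem : (x * UL k g 0 a) • Ue k g ∈ Usub k g := by
    rw [mul_smul]
    exact Submodule.smul_mem _ x (Submodule.subset_span (UIsRel.r3 a))
  exact (Submodule.Quotient.mk_eq_zero _).mpr hmem

/-- In the module `M` one has, for every `a ∈ g`, every `n ≥ 1`, all
`b₁, …, b_n ∈ g` and every `s ≥ 0`:
`L(0,a)·L(1,b₁)⋯L(1,b_n)·D^s·e = Σ_{i=1}^{n} L(1,b₁)⋯L(1,[a,bᵢ])⋯L(1,b_n)·D^s·e`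
(the second family of additional rewriting rules completing the defining relations of the
split null extension `U(Cur g, N=3) ⊕ (H ⊗ P(g))` to a Gröbner–Shirshov basis; it reflects
the Leibniz rule of the Poisson bracket of `P(g)`). -/
theorem UMod_Leibniz (a : g) (n : ℕ) (hn : 1 ≤ n) (b : Fin n → g) (s : ℕ) :
    Umk k g ((UL k g 0 a * (List.ofFn fun i => UL k g 1 (b i)).prod * UD k g ^ s) • Ue k g)
      = ∑ i : Fin n,
          Umk k g
            (((List.ofFn fun j => UL k g 1 (if j = i then ⁅a, b j⁆ else b j)).prod *
                UD k g ^ s) • Ue k g) := by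
  have key := UL0_commutator k g a n b
  have hsum : ∑ i : Fin n,
      Umk k g (((List.ofFn fun j => UL k g 1 (if j = i then ⁅a, b j⁆ else b j)).prod *
          UD k g ^ s) • Ue k g) =
        Umk k g ((∑ i : Fin n,
          ((List.ofFn fun j => UL k g 1 (if j = i then ⁅a, b j⁆ else b j)).prod *
            UD k g ^ s)) • Ue k g) := by
    rw [Finset.sum_smul]
    exact (map_sum (Submodule.mkQ (Usub k g)) _ _).symm
  rw [hsum]
  have hX : UL k g 0 a * (List.ofFn fun i => UL k g 1 (b i)).prod * UD k g ^ s =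
      (List.ofFn fun i => UL k g 1 (b i)).prod * UD k g ^ s * UL k g 0 a +
        ∑ i : Fin n,
          ((List.ofFn fun j => UL k g 1 (if j = i then ⁅a, b j⁆ else b j)).prod *
            UD k g ^ s) := by
    rw [key, add_mul, Finset.sum_mul, mul_assoc, UL0_mul_UD_pow, ← mul_assoc]
  rw [hX, add_smul]
  have h0 := Umk_UL0_zero k g a ((List.ofFn fun i => UL k g 1 (b i)).prod * UD k g ^ s)
  show Submodule.Quotient.mk _ = Submodule.Quotient.mk _
  rw [Submodule.Quotient.mk_add]
  rw [show (Submodule.Quotient.mk (((List.ofFn fun i => UL k g 1 (b i)).prod * UD k g ^ s *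
      UL k g 0 a) • Ue k g) : UMod k g) = 0 from h0, zero_add]
end

section
/- In the module M one has L(2,a)·L(1,b)·e = 0 for all a, b ∈ g. -/
set_option maxSynthPendingDepth 3

open scoped TensorProduct

variable (k : Type*) [Field k] [CharZero k] (g : Type*) [LieRing g] [LieAlgebra k g]

/-- In the module `M` one has `L(2,a)·L(1,b)·e = 0` for all `a, b ∈ g`. -/
theorem UMod_L2_L1_e (a b : g) :
    Umk k g ((UL k g 2 a * UL k g 1 b) • Ue k g) = 0 := by
  have hmul : UL k g 2 a * UL k g 1 b
      = UL k g 1 b * UL k g 2 a + UL k g 3 ⁅a, b⁆ := by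
    have h := RingQuot.mkAlgHom_rel k (URel.LL 2 1 a b : URel k g _ _)
    simpa [UL, map_mul, map_add] using h
  have hmem : (UL k g 2 a * UL k g 1 b) • Ue k g ∈ Usub k g := by
    rw [hmul, add_smul, mul_smul]
    exact Submodule.add_mem _
      (Submodule.smul_mem _ _ (Submodule.subset_span (UIsRel.r4 2 le_rfl a)))
      (Submodule.subset_span (UIsRel.r4 3 (by norm_num) ⁅a, b⁆))
  exact (Submodule.Quotient.mk_eq_zero _).2 hmem
end
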